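/- Under the same linear structural equations as in the NIE case: NDE − NDE^R = γ₇·β₂·Var(ε_L) + γ₇·Cov(ε_L, ε_M), where NDE = E[Y_{1,M₀} − Y_{0,M₀}] and NDE^R = E[Y_{1,G₀} − Y_{0,G₀}] with G₀ an independent copy of M₀. -/

import Mathlib

/-!
Write `Y_{t,X} = A_t + B_t ε_L + C_t X + D_t ε_L X + ε_Y` with `D_t = γ₆ + γ₇ t`. Since `G₀` has
the law of `M₀`, the two mediators have the same mean, so swapping `M₀` for `G₀` changes
`E[Y_{t,·}]` only through the interaction term: by `D_t (E[ε_L M₀] - E[ε_L G₀])`. Independence of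
`G₀` and `ε_L` makes `E[ε_L G₀] = E[ε_L] E[M₀]`, so that change is `D_t Cov(ε_L, M₀)`, and
`D₁ - D₀ = γ₇`. Finally `M₀ = β₀ + β₂ α₀ + β₂ ε_L + ε_M` gives
`Cov(ε_L, M₀) = β₂ Var(ε_L) + Cov(ε_L, ε_M)`.
-/

open MeasureTheory ProbabilityTheory

namespace ProbabilityTheory

variable {Ω α : Type*} [MeasurableSpace Ω] [MeasurableSpace α] {μ : Measure Ω}

lemma identDistrib_of_map_eq {Ω' : Type*} [MeasurableSpace Ω'] {ν : Measure Ω'} [NeZero ν]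
    {f : Ω → α} {g : Ω' → α} (hg : AEMeasurable g ν)
    (h : μ.map f = ν.map g) : IdentDistrib f g μ ν where
  aemeasurable_fst := .of_map_ne_zero (h ▸ (Measure.map_ne_zero_iff hg).2 (NeZero.ne ν))
  aemeasurable_snd := hg
  map_eq := h

lemma IdentDistrib.integral_mul_of_indepFun {ε G X : Ω → ℝ} (hGX : IdentDistrib G X μ μ)
    (hind : IndepFun ε G μ) (hε : AEStronglyMeasurable ε μ) :
    ∫ ω, ε ω * G ω ∂μ = (∫ ω, ε ω ∂μ) * ∫ ω, X ω ∂μ := by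
  rw [hind.integral_fun_mul_eq_mul_integral hε hGX.aemeasurable_fst.aestronglyMeasurable,
    hGX.integral_eq]

end ProbabilityTheory

namespace MeasureTheory

variable {Ω : Type*} [MeasurableSpace Ω] {μ : Measure Ω} {u v w : Ω → ℝ}

lemma integral_mul_add_mul_add (a b : ℝ) (hu : Integrable u μ) (hv : Integrable v μ)
    (hw : Integrable w μ) :
    ∫ ω, (a * u ω + b * v ω + w ω) ∂μ = a * ∫ ω, u ω ∂μ + b * ∫ ω, v ω ∂μ + ∫ ω, w ω ∂μ := by
  have huv : Integrable (fun ω => a * u ω + b * v ω) μ := (hu.const_mul a).add (hv.const_mul b)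
  rw [integral_add huv hw, integral_add (hu.const_mul a) (hv.const_mul b), integral_const_mul,
    integral_const_mul]

lemma integral_const_add_mul_add [IsProbabilityMeasure μ] (a b : ℝ) (hu : Integrable u μ)
    (hv : Integrable v μ) :
    ∫ ω, (a + b * u ω + v ω) ∂μ = a + b * ∫ ω, u ω ∂μ + ∫ ω, v ω ∂μ := by
  simpa using integral_mul_add_mul_add a b (integrable_const (1 : ℝ)) hu hv

lemma integral_mul_sub_integral_mul_integral_of_eq_const_add_mul_add [IsProbabilityMeasure μ]
    {f g h : Ω → ℝ} (a b : ℝ) (hf : Integrable f μ) (hh : Integrable h μ)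
    (hff : Integrable (fun ω => f ω * f ω) μ) (hfh : Integrable (fun ω => f ω * h ω) μ)
    (hg : ∀ ω, g ω = a + b * f ω + h ω) :
    (∫ ω, f ω * g ω ∂μ) - (∫ ω, f ω ∂μ) * ∫ ω, g ω ∂μ
      = b * ((∫ ω, f ω * f ω ∂μ) - (∫ ω, f ω ∂μ) ^ 2)
        + ((∫ ω, f ω * h ω ∂μ) - (∫ ω, f ω ∂μ) * ∫ ω, h ω ∂μ) := by
  have hfg : ∫ ω, f ω * g ω ∂μ = ∫ ω, (a * f ω + b * (f ω * f ω) + f ω * h ω) ∂μ := by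
    congr 1 with ω; rw [hg]; ring
  rw [hfg, integral_mul_add_mul_add a b hf hff hfh]
  simp only [hg]
  rw [integral_const_add_mul_add a b hf hh]
  ring

end MeasureTheory

theorem stmt12_general {Ω : Type*} [MeasurableSpace Ω] (μ : Measure Ω) [IsProbabilityMeasure μ]
    (α0 α1 β0 β1 β2 β3 γ0 γ1 γ2 γ3 γ4 γ5 γ6 γ7 : ℝ)
    (εL εM εY : Ω → ℝ)
    (hεL : Integrable εL μ) (hεM : Integrable εM μ) (hεY : Integrable εY μ)
    (hεL2 : Integrable (fun ω => εL ω * εL ω) μ)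
    (hεLM : Integrable (fun ω => εL ω * εM ω) μ)
    (L : ℝ → Ω → ℝ) (M : ℝ → Ω → ℝ) (Y : ℝ → (Ω → ℝ) → Ω → ℝ)
    (hL : ∀ t ω, L t ω = α0 + α1 * t + εL ω)
    (hM : ∀ t ω, M t ω = β0 + β1 * t + β2 * L t ω + β3 * t * L t ω + εM ω)
    (hY : ∀ t (X : Ω → ℝ) ω, Y t X ω
      = γ0 + γ1 * t + γ2 * L t ω + γ3 * X ω + γ4 * t * L t ω + γ5 * t * X ω
        + γ6 * L t ω * X ω + γ7 * t * L t ω * X ω + εY ω)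
    (G1 G0 : Ω → ℝ)
    (hdist0 : Measure.map G0 μ = Measure.map (M 0) μ)
    (hindep : IndepFun (fun ω => (G1 ω, G0 ω)) (fun ω => (εL ω, εY ω)) μ) :
    ((∫ ω, Y 1 (M 0) ω ∂μ) - ∫ ω, Y 0 (M 0) ω ∂μ)
      - ((∫ ω, Y 1 G0 ω ∂μ) - ∫ ω, Y 0 G0 ω ∂μ)
    = γ7 * β2 * ((∫ ω, εL ω * εL ω ∂μ) - (∫ ω, εL ω ∂μ) ^ 2)
      + γ7 * ((∫ ω, εL ω * εM ω ∂μ) - (∫ ω, εL ω ∂μ) * ∫ ω, εM ω ∂μ) := by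
  have hM0 : ∀ ω, M 0 ω = (β0 + β2 * α0) + β2 * εL ω + εM ω := fun ω => by rw [hM, hL]; ring
  have hM0int : Integrable (M 0) μ :=
    (((integrable_const _).add (hεL.const_mul β2)).add hεM).congr
      (ae_of_all _ fun ω => (hM0 ω).symm)
  have hεLM0 : Integrable (fun ω => εL ω * M 0 ω) μ :=
    (((hεL.const_mul (β0 + β2 * α0)).add (hεL2.const_mul β2)).add hεLM).congr
      (ae_of_all _ fun ω => by simp only [Pi.add_apply, hM0]; ring)
  have hG0 : IdentDistrib G0 (M 0) μ μ := identDistrib_of_map_eq hM0int.aemeasurable hdist0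
  have hG0int : Integrable G0 μ := hG0.integrable_iff.2 hM0int
  have hindG0 : IndepFun εL G0 μ := (hindep.comp measurable_snd measurable_fst).symm
  have hεLG0 : Integrable (fun ω => εL ω * G0 ω) μ := hindG0.integrable_mul hεL hG0int
  have hEY : ∀ t X, Integrable X μ → Integrable (fun ω => εL ω * X ω) μ →
      ∫ ω, Y t X ω ∂μ
        = (γ0 + γ1 * t + (γ2 + γ4 * t) * (α0 + α1 * t)) + (γ2 + γ4 * t) * ∫ ω, εL ω ∂μ
          + ((γ3 + γ5 * t + (γ6 + γ7 * t) * (α0 + α1 * t)) * ∫ ω, X ω ∂μ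
            + (γ6 + γ7 * t) * (∫ ω, εL ω * X ω ∂μ) + ∫ ω, εY ω ∂μ) := by
    intro t X hX hεLX
    have hrest : Integrable (fun ω => (γ3 + γ5 * t + (γ6 + γ7 * t) * (α0 + α1 * t)) * X ω
        + (γ6 + γ7 * t) * (εL ω * X ω) + εY ω) μ :=
      ((hX.const_mul _).add (hεLX.const_mul _)).add hεY
    rw [← integral_mul_add_mul_add _ _ hX hεLX hεY, ← integral_const_add_mul_add _ _ hεL hrest]
    congr 1 with ω
    rw [hY, hL]; ring
  rw [hEY 1 (M 0) hM0int hεLM0, hEY 0 (M 0) hM0int hεLM0, hEY 1 G0 hG0int hεLG0,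
    hEY 0 G0 hG0int hεLG0, hG0.integral_eq,
    hG0.integral_mul_of_indepFun hindG0 hεL.aestronglyMeasurable]
  linear_combination γ7 *
    integral_mul_sub_integral_mul_integral_of_eq_const_add_mul_add _ β2 hεL hεM hεL2 hεLM hM0

/-- STATEMENT 11 (Proposition 4, NDE part):
under the linear structural equations, NDE − NDE^R = γ₇β₂ Var(ε_L) + γ₇ Cov(ε_L, ε_M). -/
theorem stmt12 {Ω : Type*} [MeasurableSpace Ω] (μ : Measure Ω) [IsProbabilityMeasure μ]
    (α0 α1 β0 β1 β2 β3 γ0 γ1 γ2 γ3 γ4 γ5 γ6 γ7 : ℝ)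
    (εL εM εY : Ω → ℝ)
    (hεL : Integrable εL μ) (hεM : Integrable εM μ) (hεY : Integrable εY μ)
    (hεL2 : Integrable (fun ω => εL ω * εL ω) μ)
    (hεLM : Integrable (fun ω => εL ω * εM ω) μ)
    (L : ℝ → Ω → ℝ) (M : ℝ → Ω → ℝ) (Y : ℝ → (Ω → ℝ) → Ω → ℝ)
    (hL : ∀ t ω, L t ω = α0 + α1 * t + εL ω)
    (hM : ∀ t ω, M t ω = β0 + β1 * t + β2 * L t ω + β3 * t * L t ω + εM ω)
    (hY : ∀ t (X : Ω → ℝ) ω, Y t X ω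
      = γ0 + γ1 * t + γ2 * L t ω + γ3 * X ω + γ4 * t * L t ω + γ5 * t * X ω
        + γ6 * L t ω * X ω + γ7 * t * L t ω * X ω + εY ω)
    (G1 G0 : Ω → ℝ)
    (hdist1 : Measure.map G1 μ = Measure.map (M 1) μ)
    (hdist0 : Measure.map G0 μ = Measure.map (M 0) μ)
    (hindep : IndepFun (fun ω => (G1 ω, G0 ω)) (fun ω => (εL ω, εY ω)) μ)
    (hI1 : Integrable (Y 1 (M 0)) μ) (hI2 : Integrable (Y 0 (M 0)) μ)
    (hI3 : Integrable (Y 1 G0) μ) (hI4 : Integrable (Y 0 G0) μ) :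
    ((∫ ω, Y 1 (M 0) ω ∂μ) - ∫ ω, Y 0 (M 0) ω ∂μ)
      - ((∫ ω, Y 1 G0 ω ∂μ) - ∫ ω, Y 0 G0 ω ∂μ)
    = γ7 * β2 * ((∫ ω, εL ω * εL ω ∂μ) - (∫ ω, εL ω ∂μ) ^ 2)
      + γ7 * ((∫ ω, εL ω * εM ω ∂μ) - (∫ ω, εL ω ∂μ) * ∫ ω, εM ω ∂μ) :=
  stmt12_general μ α0 α1 β0 β1 β2 β3 γ0 γ1 γ2 γ3 γ4 γ5 γ6 γ7 εL εM εY hεL hεM hεY hεL2 hεLM L M Y hL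
    hM hY G1 G0 hdist0 hindep
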